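/- Let A ∈ ℝ^{n×n} (or ℂ^{n×n}) and let l, p, r > 1 be integers with n = lpr. If A ≠ 0 admits both an (l, pr) factorization A = A₁ ⊗ A₂ and a (pl, r) factorization A = Â₁ ⊗ Â₂, then there exist matrices L ∈ ℝ^{l×l}, P ∈ ℝ^{p×p}, R ∈ ℝ^{r×r} such that A = L ⊗ P ⊗ R. -/

import Mathlib

namespace KronPaper

/-- Kronecker product of square real matrices. -/
def kronR {m n : ℕ} (A : Matrix (Fin m) (Fin m) ℝ) (B : Matrix (Fin n) (Fin n) ℝ) :
    Matrix (Fin (m * n)) (Fin (m * n)) ℝ :=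
  Matrix.of fun i j => by
    have hn : 0 < n := by
      rcases Nat.eq_zero_or_pos n with h | h
      · exact absurd i.isLt (by simp [h])
      · exact h
    exact
      A ⟨i.val / n, Nat.div_lt_of_lt_mul (lt_of_lt_of_eq i.isLt (mul_comm m n))⟩
        ⟨j.val / n, Nat.div_lt_of_lt_mul (lt_of_lt_of_eq j.isLt (mul_comm m n))⟩
      * B ⟨i.val % n, Nat.mod_lt _ hn⟩ ⟨j.val % n, Nat.mod_lt _ hn⟩

/-- Cast a square real matrix along an equality of sizes. -/
def castR {m n : ℕ} (h : m = n) (M : Matrix (Fin m) (Fin m) ℝ) :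
    Matrix (Fin n) (Fin n) ℝ :=
  Matrix.reindex (finCongr h) (finCongr h) M

/-!
If `A = A₁ ⊗ A₂ = B₁ ⊗ B₂` with `A₁` of size `l`, `B₂` of size `r` and `A₁ x y ≠ 0`, then
comparing the two factorizations on the `(x, y)` block of `A₁` gives
`A₂ = P ⊗ B₂` with `P = (A₁ x y)⁻¹ • B₁[(x, ·), (y, ·)]`, so `A = A₁ ⊗ P ⊗ B₂`.
-/

open Matrix
open scoped Kronecker

theorem kronR_eq_reindex_kronecker {m n : ℕ} (A : Matrix (Fin m) (Fin m) ℝ)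
    (B : Matrix (Fin n) (Fin n) ℝ) :
    kronR A B = reindex finProdFinEquiv finProdFinEquiv (A ⊗ₖ B) := by
  ext i j
  rfl

-- `((a, b), c) ↦ (a * p + b) * r + c`
def finTripleEquiv (l p r : ℕ) : (Fin l × Fin p) × Fin r ≃ Fin (l * p * r) :=
  (finProdFinEquiv.prodCongr (Equiv.refl _)).trans finProdFinEquiv

theorem kronR_eq_reindex_finTripleEquiv {l p r : ℕ} (M : Matrix (Fin (l * p)) (Fin (l * p)) ℝ)
    (N : Matrix (Fin r) (Fin r) ℝ) :
    kronR M N = reindex (finTripleEquiv l p r) (finTripleEquiv l p r)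
      (reindex finProdFinEquiv.symm finProdFinEquiv.symm M ⊗ₖ N) := by
  ext i j
  simp [kronR_eq_reindex_kronecker, finTripleEquiv, -finProdFinEquiv_symm_apply]

theorem kronR_kronR_eq_reindex {l p r : ℕ} (L : Matrix (Fin l) (Fin l) ℝ)
    (P : Matrix (Fin p) (Fin p) ℝ) (R : Matrix (Fin r) (Fin r) ℝ) :
    kronR (kronR L P) R = reindex (finTripleEquiv l p r) (finTripleEquiv l p r) (L ⊗ₖ P ⊗ₖ R) := by
  rw [kronR_eq_reindex_finTripleEquiv, kronR_eq_reindex_kronecker]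
  simp

theorem castR_kronR_left {m m' n : ℕ} (h : m = m') (h' : m * n = m' * n)
    (M : Matrix (Fin m) (Fin m) ℝ) (N : Matrix (Fin n) (Fin n) ℝ) :
    castR h' (kronR M N) = kronR (castR h M) N := by
  subst h
  rfl

theorem finCongr_finProdFinEquiv_assoc {l p r : ℕ} (a : Fin l) (b : Fin p) (c : Fin r) :
    finCongr (mul_assoc l p r).symm (finProdFinEquiv (a, finProdFinEquiv (b, c))) =
      finTripleEquiv l p r ((a, b), c) := by
  ext
  simp [finTripleEquiv]
  ring

theorem castR_kronR_mul_assoc {l p r : ℕ} (M : Matrix (Fin l) (Fin l) ℝ)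
    (N : Matrix (Fin (p * r)) (Fin (p * r)) ℝ) :
    castR (mul_assoc l p r).symm (kronR M N) =
      reindex (finTripleEquiv l p r) (finTripleEquiv l p r)
        (reindex (Equiv.prodAssoc _ _ _).symm (Equiv.prodAssoc _ _ _).symm
          (M ⊗ₖ reindex finProdFinEquiv.symm finProdFinEquiv.symm N)) := by
  rw [← Equiv.symm_apply_eq]
  ext ⟨⟨a, b⟩, c⟩ ⟨⟨a', b'⟩, c'⟩
  simp [castR, kronR_eq_reindex_kronecker, ← finCongr_finProdFinEquiv_assoc]

theorem exists_eq_kronecker_of_kronecker_assoc_eq {R ι κ μ : Type*} [DivisionRing R]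
    {A₁ : Matrix ι ι R} {A₂ : Matrix (κ × μ) (κ × μ) R} {B₁ : Matrix (ι × κ) (ι × κ) R}
    {B₂ : Matrix μ μ R}
    (h : reindex (Equiv.prodAssoc ι κ μ) (Equiv.prodAssoc ι κ μ) (B₁ ⊗ₖ B₂) = A₁ ⊗ₖ A₂)
    (hA₁ : A₁ ≠ 0) : ∃ P : Matrix κ κ R, A₂ = P ⊗ₖ B₂ := by
  obtain ⟨x, y, hxy⟩ : ∃ x y, A₁ x y ≠ 0 := by
    by_contra! hzero
    exact hA₁ (Matrix.ext hzero)
  refine ⟨Matrix.of fun k k' => (A₁ x y)⁻¹ * B₁ (x, k) (y, k'), ?_⟩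
  ext ⟨k, m⟩ ⟨k', m'⟩
  have hentry := congr_fun (congr_fun h (x, k, m)) (y, k', m')
  simp only [reindex_apply, submatrix_apply, Equiv.prodAssoc_symm_apply, kroneckerMap_apply]
    at hentry
  simp [mul_assoc, hentry, inv_mul_cancel_left₀ hxy]

/-- for real matrices, a nonzero `A` admitting both an `(l, pr)` and a
`(pl, r)` factorization admits an `(l, p, r)` factorization. -/
theorem two_factorizations_to_three_real (l p r : ℕ)
    (A : Matrix (Fin (l * p * r)) (Fin (l * p * r)) ℝ) (hA : A ≠ 0)
    (h₁ : ∃ (A₁ : Matrix (Fin l) (Fin l) ℝ) (A₂ : Matrix (Fin (p * r)) (Fin (p * r)) ℝ),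
        A = castR (mul_assoc l p r).symm (kronR A₁ A₂))
    (h₂ : ∃ (B₁ : Matrix (Fin (p * l)) (Fin (p * l)) ℝ) (B₂ : Matrix (Fin r) (Fin r) ℝ),
        A = castR (show p * l * r = l * p * r by ring) (kronR B₁ B₂)) :
    ∃ (L : Matrix (Fin l) (Fin l) ℝ) (P : Matrix (Fin p) (Fin p) ℝ)
      (R : Matrix (Fin r) (Fin r) ℝ), A = kronR (kronR L P) R := by
  obtain ⟨A₁, A₂, rfl⟩ := h₁
  obtain ⟨B₁, B₂, hB⟩ := h₂
  have hA₁ : A₁ ≠ 0 := by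
    rintro rfl
    exact hA (by simp [castR, kronR_eq_reindex_kronecker])
  rw [castR_kronR_left (mul_comm p l), kronR_eq_reindex_finTripleEquiv, castR_kronR_mul_assoc,
    EmbeddingLike.apply_eq_iff_eq, ← reindex_symm, Equiv.symm_apply_eq, eq_comm] at hB
  obtain ⟨P, hP⟩ := exists_eq_kronecker_of_kronecker_assoc_eq hB hA₁
  refine ⟨A₁, P, B₂, ?_⟩
  rw [castR_kronR_mul_assoc, hP, kronR_kronR_eq_reindex, ← kronecker_assoc, ← reindex_symm,
    Equiv.symm_apply_apply]

end KronPaper
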